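/- Let q* be a minimizer of the linear loss L over all feasible vectors, and let 0 = n_1 < n_2 < … < n_{I+1} = N be a block decomposition of q* with block values v_1 ≤ … ≤ v_I. Then for every interior block i ∈ {2,…,I−1}: if Σ_{n=n_i+1}^{n_{i+1}} z_n < 0 then v_i = v_{i+1}, and if Σ_{n=n_i+1}^{n_{i+1}} z_n > 0 then v_i = v_{i−1}. Moreover v_1 = Q_0 and v_I = Q_1. -/

import Mathlib

/-- A feasible vector: a nondecreasing vector `q 1, …, q N` with values in `[Q₀, Q₁]`. -/
def FeasibleQ (N : ℕ) (Q0 Q1 : ℝ) (q : ℕ → ℝ) : Prop :=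
  Q0 ≤ q 1 ∧ q N ≤ Q1 ∧ ∀ n, 1 ≤ n → n < N → q n ≤ q (n + 1)

/-- The linear loss `L(q) = Σ_{n=1}^N z_n q_n`. -/
def linLoss (N : ℕ) (z q : ℕ → ℝ) : ℝ :=
  ∑ n ∈ Finset.Icc 1 N, z n * q n

/-- A block decomposition of `q`: boundary indices `0 = nI 1 < nI 2 < … < nI (I+1) = N`
such that `q` is constant, equal to `v i`, on each block `{nI i + 1, …, nI (i+1)}`. -/
def BlockDecomp (N I : ℕ) (q : ℕ → ℝ) (nI : ℕ → ℕ) (v : ℕ → ℝ) : Prop :=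
  nI 1 = 0 ∧ nI (I + 1) = N ∧ (∀ i, 1 ≤ i → i ≤ I → nI i < nI (i + 1)) ∧
    ∀ i, 1 ≤ i → i ≤ I → ∀ n, nI i + 1 ≤ n → n ≤ nI (i + 1) → q n = v i

lemma qmono_aux {N : ℕ} {Q0 Q1 : ℝ} {q : ℕ → ℝ} (hq : FeasibleQ N Q0 Q1 q) :
    ∀ a b, 1 ≤ a → a ≤ b → b ≤ N → q a ≤ q b := by
  intro a b h1 hab hbN
  induction b with
  | zero => omega
  | succ b ih =>
    rcases Nat.lt_or_ge a (b + 1) with h | h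
    · exact le_trans (ih (by omega) (by omega)) (hq.2.2 b (by omega) (by omega))
    · have : a = b + 1 := by omega
      simp [this]

lemma loss_update (N : ℕ) (z q r : ℕ → ℝ) (s : Finset ℕ) (hs : s ⊆ Finset.Icc 1 N)
    (hr : ∀ n, n ∉ s → r n = q n) :
    linLoss N z r = linLoss N z q + ∑ n ∈ s, z n * (r n - q n) := by
  unfold linLoss
  have h1 : ∑ n ∈ s, z n * (r n - q n) = ∑ n ∈ Finset.Icc 1 N, z n * (r n - q n) := by
    refine Finset.sum_subset hs ?_
    intro n _ hn
    rw [hr n hn]; ring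
  rw [h1, ← Finset.sum_add_distrib]
  refine Finset.sum_congr rfl ?_
  intro n _; ring

theorem stmt13 (N : ℕ) (hN : 2 ≤ N) (Q0 Q1 : ℝ) (hQ : Q0 ≤ Q1)
    (z : ℕ → ℝ) (hz1 : 0 < z 1) (hzN : z N < 0)
    (q : ℕ → ℝ) (hq : FeasibleQ N Q0 Q1 q)
    (hmin : ∀ r, FeasibleQ N Q0 Q1 r → linLoss N z q ≤ linLoss N z r)
    (I : ℕ) (hI : 1 ≤ I) (nI : ℕ → ℕ) (v : ℕ → ℝ)
    (hblock : BlockDecomp N I q nI v) :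
    (∀ i, 2 ≤ i → i ≤ I - 1 →
      ((∑ n ∈ Finset.Icc (nI i + 1) (nI (i + 1)), z n) < 0 → v i = v (i + 1)) ∧
      ((∑ n ∈ Finset.Icc (nI i + 1) (nI (i + 1)), z n) > 0 → v i = v (i - 1))) ∧
    v 1 = Q0 ∧ v I = Q1 := by
  obtain ⟨h0, hNI, hlt, hval⟩ := hblock
  have nImono : ∀ j k, 1 ≤ j → j ≤ k → k ≤ I + 1 → nI j ≤ nI k := by
    intro j k h1 hjk hk
    induction k with
    | zero => omega
    | succ k ih =>
      rcases Nat.lt_or_ge j (k + 1) with h | h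
      · exact le_trans (ih (by omega) (by omega)) (le_of_lt (hlt k (by omega) (by omega)))
      · have : j = k + 1 := by omega
        simp [this]
  have hnI2 : 1 ≤ nI 2 := by have h : nI 1 < nI 2 := hlt 1 le_rfl hI; omega
  -- q 1 = Q0
  have hq1 : q 1 = Q0 := by
    have hN1 : N ≠ 1 := by omega
    set r : ℕ → ℝ := fun n => if n = 1 then Q0 else q n with hrdef
    have hfeas : FeasibleQ N Q0 Q1 r := by
      refine ⟨by simp [hrdef], by simp [hrdef, hN1]; exact hq.2.1, ?_⟩
      intro n h1n hnN
      by_cases hn : n = 1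
      · subst hn
        simp only [hrdef]
        norm_num
        exact le_trans hq.1 (hq.2.2 1 le_rfl (by omega))
      · simp only [hrdef, if_neg hn, if_neg (by omega : n + 1 ≠ 1)]
        exact hq.2.2 n h1n hnN
    have hm := hmin r hfeas
    rw [loss_update N z q r {1} (by simp; omega)
      (by intro n hn; simp at hn; simp [hrdef, hn])] at hm
    simp only [hrdef, Finset.sum_singleton] at hm
    norm_num at hm
    have h1 : 0 ≤ z 1 * (Q0 - q 1) := by linarith
    have h2 : Q0 ≤ q 1 := hq.1
    nlinarith
  -- q N = Q1
  have hqN : q N = Q1 := by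
    have hN1 : (1 : ℕ) ≠ N := by omega
    set r : ℕ → ℝ := fun n => if n = N then Q1 else q n with hrdef
    have hfeas : FeasibleQ N Q0 Q1 r := by
      refine ⟨by simp [hrdef, hN1]; exact hq.1, by simp [hrdef], ?_⟩
      intro n h1n hnN
      by_cases hn : n + 1 = N
      · have hnn : n ≠ N := by omega
        simp only [hrdef, if_neg hnn, if_pos hn]
        calc q n ≤ q (n + 1) := hq.2.2 n h1n hnN
          _ = q N := by rw [hn]
          _ ≤ Q1 := hq.2.1
      · simp only [hrdef, if_neg (by omega : n ≠ N), if_neg hn]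
        exact hq.2.2 n h1n hnN
    have hm := hmin r hfeas
    rw [loss_update N z q r {N} (by simp; omega)
      (by intro n hn; simp at hn; simp [hrdef, hn])] at hm
    simp only [hrdef, Finset.sum_singleton] at hm
    norm_num at hm
    have h1 : 0 ≤ z N * (Q1 - q N) := by linarith
    have h2 : q N ≤ Q1 := hq.2.1
    nlinarith
  have hv1 : v 1 = Q0 := by
    have h1 : nI 1 + 1 ≤ 1 := by omega
    have h2 : 1 ≤ nI (1 + 1) := hnI2
    rw [← hq1]
    exact (hval 1 le_rfl hI 1 h1 h2).symm
  have hvI : v I = Q1 := by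
    have h' : nI I < nI (I + 1) := hlt I hI le_rfl
    have h1 : nI I + 1 ≤ N := by omega
    have h2 : N ≤ nI (I + 1) := le_of_eq hNI.symm
    rw [← hqN]
    exact (hval I hI le_rfl N h1 h2).symm
  refine ⟨?_, hv1, hvI⟩
  intro i h2i hiI1
  have hiI : i + 1 ≤ I := by omega
  have ha1 : 1 ≤ nI i := le_trans hnI2 (nImono 2 i (by omega) h2i (by omega))
  have hab : nI i < nI (i + 1) := hlt i (by omega) (by omega)
  have hbc : nI (i + 1) < nI (i + 1 + 1) := hlt (i + 1) (by omega) hiI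
  have hcN : nI (i + 1 + 1) ≤ N := by
    rw [← hNI]; exact nImono (i + 1 + 1) (I + 1) (by omega) (by omega) le_rfl
  have hbN : nI (i + 1) < N := by omega
  set s : Finset ℕ := Finset.Icc (nI i + 1) (nI (i + 1)) with hsdef
  have hssub : s ⊆ Finset.Icc 1 N := by
    intro n hn; simp [hsdef] at hn ⊢; omega
  have hqa : q (nI i) = v (i - 1) := by
    have h' := hlt (i - 1) (by omega) (by omega)
    have hii : i - 1 + 1 = i := by omega
    rw [hii] at h'
    exact hval (i - 1) (by omega) (by omega) (nI i) (by omega) (by rw [hii])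
  have hqmid : ∀ n, nI i + 1 ≤ n → n ≤ nI (i + 1) → q n = v i :=
    fun n h1 h2 => hval i (by omega) (by omega) n h1 h2
  have hqb1 : q (nI (i + 1) + 1) = v (i + 1) :=
    hval (i + 1) (by omega) hiI (nI (i + 1) + 1) le_rfl (by omega)
  have hvge : v (i - 1) ≤ v i := by
    rw [← hqa, ← hqmid (nI i + 1) le_rfl (by omega)]
    exact hq.2.2 (nI i) ha1 (by omega)
  have hvle : v i ≤ v (i + 1) := by
    rw [← hqmid (nI (i + 1)) (by omega) le_rfl, ← hqb1]
    exact hq.2.2 (nI (i + 1)) (by omega) hbN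
  constructor
  · -- sum < 0 → v i = v (i+1)
    intro hS
    set r : ℕ → ℝ := fun n => if n ∈ s then v (i + 1) else q n with hrdef
    have hroff : ∀ n, n ∉ s → r n = q n := fun n hn => if_neg hn
    have hron : ∀ n, n ∈ s → r n = v (i + 1) := fun n hn => if_pos hn
    have hmem : ∀ n, n ∈ s ↔ nI i + 1 ≤ n ∧ n ≤ nI (i + 1) := by
      intro n; simp [hsdef]
    have hfeas : FeasibleQ N Q0 Q1 r := by
      refine ⟨?_, ?_, ?_⟩
      · rw [hroff 1 (by rw [hmem]; omega)]; exact hq.1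
      · rw [hroff N (by rw [hmem]; omega)]; exact hq.2.1
      · intro n h1n hnN
        by_cases hn : n ∈ s <;> by_cases hn1 : n + 1 ∈ s
        · rw [hron n hn, hron _ hn1]
        · -- n = nI (i+1)
          have hn' := (hmem n).mp hn
          have hne : n = nI (i + 1) := by
            have := (hmem (n + 1)).not.mp hn1; omega
          rw [hron n hn, hroff _ hn1, hne, hqb1]
        · -- n = nI i
          have hn1' := (hmem (n + 1)).mp hn1
          have hne : n = nI i := by
            have := (hmem n).not.mp hn; omega
          rw [hroff n hn, hron _ hn1, hne, hqa]
          linarith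
        · rw [hroff n hn, hroff _ hn1]
          exact hq.2.2 n h1n hnN
    have hm := hmin r hfeas
    rw [loss_update N z q r s hssub hroff] at hm
    have hsum : ∑ n ∈ s, z n * (r n - q n) = (∑ n ∈ s, z n) * (v (i + 1) - v i) := by
      rw [Finset.sum_mul]
      refine Finset.sum_congr rfl ?_
      intro n hn
      rw [hron n hn, hqmid n ((hmem n).mp hn).1 ((hmem n).mp hn).2]
    rw [hsum] at hm
    nlinarith
  · -- sum > 0 → v i = v (i-1)
    intro hS
    set r : ℕ → ℝ := fun n => if n ∈ s then v (i - 1) else q n with hrdef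
    have hroff : ∀ n, n ∉ s → r n = q n := fun n hn => if_neg hn
    have hron : ∀ n, n ∈ s → r n = v (i - 1) := fun n hn => if_pos hn
    have hmem : ∀ n, n ∈ s ↔ nI i + 1 ≤ n ∧ n ≤ nI (i + 1) := by
      intro n; simp [hsdef]
    have hfeas : FeasibleQ N Q0 Q1 r := by
      refine ⟨?_, ?_, ?_⟩
      · rw [hroff 1 (by rw [hmem]; omega)]; exact hq.1
      · rw [hroff N (by rw [hmem]; omega)]; exact hq.2.1
      · intro n h1n hnN
        by_cases hn : n ∈ s <;> by_cases hn1 : n + 1 ∈ s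
        · rw [hron n hn, hron _ hn1]
        · have hn' := (hmem n).mp hn
          have hne : n = nI (i + 1) := by
            have := (hmem (n + 1)).not.mp hn1; omega
          rw [hron n hn, hroff _ hn1, hne, hqb1]
          linarith
        · have hn1' := (hmem (n + 1)).mp hn1
          have hne : n = nI i := by
            have := (hmem n).not.mp hn; omega
          rw [hroff n hn, hron _ hn1, hne, hqa]
        · rw [hroff n hn, hroff _ hn1]
          exact hq.2.2 n h1n hnN
    have hm := hmin r hfeas
    rw [loss_update N z q r s hssub hroff] at hm
    have hsum : ∑ n ∈ s, z n * (r n - q n) = (∑ n ∈ s, z n) * (v (i - 1) - v i) := by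
      rw [Finset.sum_mul]
      refine Finset.sum_congr rfl ?_
      intro n hn
      rw [hron n hn, hqmid n ((hmem n).mp hn).1 ((hmem n).mp hn).2]
    rw [hsum] at hm
    nlinarith
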